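/- There do not exist vectors w_0, …, w_8 ∈ ℝ² and reals h_0, …, h_8 such that (w_0,…,w_8) is an admissible extended-Gale configuration for C_6(9) and the intersection heights satisfy the chain of strict inequalities z_{038} < z_{238} < z_{236} < z_{036} < z_{016} < z_{056} < z_{256} < z_{567} < z_{367} < z_{167} < z_{678} < z_{078} < z_{278} < z_{478} < z_{147} < z_{127} < z_{123} < z_{012} < z_{125} < z_{258} < z_{058} < z_{458} < z_{456} < z_{145} < z_{345} < z_{347} < z_{234} < z_{034} < z_{014} < z_{018}. (This is the nonrealizability of the Hamilton HK AOF orientation NR_3^6 of the graph of C_6(9)^Δ.) -/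

import Mathlib

noncomputable section

/-- For `v = (x, y) ∈ ℝ²`, `u · v^⊥ = det(u, v)` where `v^⊥ = (y, -x)`. -/
def dperp (u v : ℝ × ℝ) : ℝ := u.1 * v.2 - u.2 * v.1

/-- `[p q r]`: the determinant of the 3×3 matrix with columns `(pₓ,p_y,1)`, `(qₓ,q_y,1)`,
`(rₓ,r_y,1)`. -/
def tdet (p q r : ℝ × ℝ) : ℝ :=
  p.1 * (q.2 - r.2) - q.1 * (p.2 - r.2) + r.1 * (p.2 - q.2)

/-- The intersection height
`z(u,h_u; v,h_v; w,h_w) = ((u·v^⊥)·h_w + (w·u^⊥)·h_v + (v·w^⊥)·h_u) / [u v w]`. -/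
def iheight (u v w : ℝ × ℝ) (hu hv hw : ℝ) : ℝ :=
  (dperp u v * hw + dperp w u * hv + dperp v w * hu) / tdet u v w

/-- The 30 vertex triples of `C₆(9)^Δ`: complements in `{0,…,8}` of the facets of the
cyclic polytope `C₆(9)` given by Gale's evenness criterion. -/
def C69triples : Set (Fin 9 × Fin 9 × Fin 9) :=
  {(0, 1, 2), (0, 1, 4), (0, 1, 6), (0, 1, 8), (0, 3, 4), (0, 3, 6), (0, 3, 8), (0, 5, 6), (0, 5, 8), (0, 7, 8), (1, 2, 3), (1, 2, 5), (1, 2, 7), (1, 4, 5), (1, 4, 7), (1, 6, 7), (2, 3, 4), (2, 3, 6), (2, 3, 8), (2, 5, 6), (2, 5, 8), (2, 7, 8), (3, 4, 5), (3, 4, 7), (3, 6, 7), (4, 5, 6), (4, 5, 8), (4, 7, 8), (5, 6, 7), (6, 7, 8)}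

/-- `(w₀, …, w₈)` is an admissible extended-Gale configuration for `C₆(9)`: the `w_a` are
positive multiples of unit vectors in clockwise radial order `0, 2, 4, 6, 8, 1, 3, 5, 7`
around the origin, a 3-element subset `{i < j < k}` of `{0,…,8}` has `0` in the interior
of `conv {wᵢ, wⱼ, w_k}` iff it is one of the 30 vertex triples, and each vertex triple
has `[wᵢ wⱼ w_k] > 0`. -/
def AdmissibleC69 (w : Fin 9 → ℝ × ℝ) : Prop :=
  (∃ θ r : Fin 9 → ℝ,
    (∀ a : Fin 9, 0 < r a ∧ w a = (r a * Real.cos (θ a), r a * Real.sin (θ a))) ∧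
    θ 0 > θ 2 ∧ θ 2 > θ 4 ∧ θ 4 > θ 6 ∧ θ 6 > θ 8 ∧ θ 8 > θ 1 ∧ θ 1 > θ 3 ∧ θ 3 > θ 5 ∧
    θ 5 > θ 7 ∧ θ 7 > θ 0 - 2 * Real.pi) ∧
  (∀ i j k : Fin 9, i < j → j < k →
    ((0 : ℝ × ℝ) ∈ interior (convexHull ℝ {w i, w j, w k}) ↔ (i, j, k) ∈ C69triples)) ∧
  (∀ i j k : Fin 9, (i, j, k) ∈ C69triples → 0 < tdet (w i) (w j) (w k))

/-- The intersection height `z_{ijk}` determined by the configuration `w` and the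
lifting heights `h`. -/
def zC69 (w : Fin 9 → ℝ × ℝ) (h : Fin 9 → ℝ) (i j k : Fin 9) : ℝ :=
  iheight (w i) (w j) (w k) (h i) (h j) (h k)


/-- `x*y < 0` with `0 < x` gives `y < 0`. -/
lemma sign1 {x y : ℝ} (h : 0 < x) (hxy : x*y < 0) : y < 0 := by nlinarith
lemma sign2 {x y : ℝ} (h : 0 < x) (hxy : 0 < x*y) : 0 < y := by nlinarith
lemma sign3 {x y : ℝ} (h : x < 0) (hxy : x*y < 0) : 0 < y := by nlinarith
lemma sign4 {x y : ℝ} (h : x < 0) (hxy : 0 < x*y) : y < 0 := by nlinarith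

/-- The 4×4 determinant with rows `(x, y, h, 1)`. -/
def Vdet (p q r s : ℝ × ℝ) (a b c d : ℝ) : ℝ :=
  a * tdet q r s - b * tdet p r s + c * tdet p q s - d * tdet p q r

lemma gale_core (p q r : ℝ×ℝ)
    (hint : (0:ℝ×ℝ) ∈ interior (convexHull ℝ ({p,q,r} : Set (ℝ×ℝ))))
    (htd : 0 < tdet p q r) : 0 < dperp q r := by
  by_contra hng
  push_neg at hng
  obtain ⟨α, hα⟩ : ∃ a, q.2 - r.2 = a := ⟨_, rfl⟩
  obtain ⟨β, hβ⟩ : ∃ b, r.1 - q.1 = b := ⟨_, rfl⟩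
  have hid : tdet p q r = p.1*α + p.2*β + dperp q r := by
    simp only [tdet, dperp, ← hα, ← hβ]; ring
  have hgg : 0 < α^2 + β^2 := by
    rcases lt_or_ge 0 (α^2+β^2) with hcase|hcase
    · exact hcase
    · have h1 : α = 0 := by nlinarith [sq_nonneg α, sq_nonneg β]
      have h2 : β = 0 := by nlinarith [sq_nonneg α, sq_nonneg β]
      rw [h1, h2] at hid; nlinarith
  have hlin : IsLinearMap ℝ (fun x : ℝ×ℝ => x.1*α + x.2*β) := by
    constructor
    · intro u v; simp [Prod.fst_add, Prod.snd_add]; ring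
    · intro c u; simp [Prod.smul_fst, Prod.smul_snd, smul_eq_mul]; ring
  have hsub : convexHull ℝ ({p,q,r} : Set (ℝ×ℝ)) ⊆ {x : ℝ×ℝ | 0 ≤ x.1*α + x.2*β + dperp q r} := by
    apply convexHull_min
    · intro x hx
      simp only [Set.mem_insert_iff, Set.mem_singleton_iff] at hx
      rcases hx with h|h|h <;> rw [h] <;> simp only [Set.mem_setOf_eq]
      · linarith [hid, htd]
      · have : q.1*α + q.2*β + dperp q r = 0 := by simp only [← hα, ← hβ, dperp]; ring
        linarith
      · have : r.1*α + r.2*β + dperp q r = 0 := by simp only [← hα, ← hβ, dperp]; ring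
        linarith
    · have he : {x : ℝ×ℝ | 0 ≤ x.1*α + x.2*β + dperp q r} = {x : ℝ×ℝ | -(dperp q r) ≤ x.1*α + x.2*β} := by
        ext x; simp only [Set.mem_setOf_eq]; constructor <;> intro <;> linarith
      rw [he]
      exact convex_halfSpace_ge hlin _
  have hmem : convexHull ℝ ({p,q,r} : Set (ℝ×ℝ)) ∈ nhds (0:ℝ×ℝ) :=
    mem_interior_iff_mem_nhds.mp hint
  have hcont : Filter.Tendsto (fun t:ℝ => ((-t*α, -t*β) : ℝ×ℝ)) (nhds 0) (nhds (0:ℝ×ℝ)) := by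
    have hc : Continuous (fun t:ℝ => ((-t*α, -t*β) : ℝ×ℝ)) := by continuity
    convert hc.tendsto 0 using 2 <;> simp [Prod.ext_iff]
  have hpre : {t:ℝ | ((-t*α,-t*β):ℝ×ℝ) ∈ convexHull ℝ ({p,q,r} : Set (ℝ×ℝ))} ∈ nhds (0:ℝ) :=
    hcont hmem
  obtain ⟨δ, hδpos, hball⟩ := Metric.mem_nhds_iff.mp hpre
  have htm : (δ/2) ∈ Metric.ball (0:ℝ) δ := by
    simp only [Metric.mem_ball, Real.dist_eq, sub_zero]
    rw [abs_of_pos (by linarith)]; linarith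
  have hx := hsub (hball htm)
  simp only [Set.mem_setOf_eq] at hx
  nlinarith [mul_pos hδpos hgg, hx, hng]

lemma gale3 (p q r : ℝ×ℝ)
    (hint : (0:ℝ×ℝ) ∈ interior (convexHull ℝ ({p,q,r} : Set (ℝ×ℝ))))
    (htd : 0 < tdet p q r) : 0 < dperp p q ∧ 0 < dperp q r ∧ 0 < dperp r p := by
  have e1 : ({r,p,q} : Set (ℝ×ℝ)) = {p,q,r} := by
    ext x; simp only [Set.mem_insert_iff, Set.mem_singleton_iff]; tauto
  have e2 : ({q,r,p} : Set (ℝ×ℝ)) = {p,q,r} := by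
    ext x; simp only [Set.mem_insert_iff, Set.mem_singleton_iff]; tauto
  have t1 : 0 < tdet r p q := by simp only [tdet] at htd ⊢; linarith
  have t2 : 0 < tdet q r p := by simp only [tdet] at htd ⊢; linarith
  exact ⟨gale_core r p q (by rw [e1]; exact hint) t1,
         gale_core p q r hint htd,
         gale_core q r p (by rw [e2]; exact hint) t2⟩

set_option maxHeartbeats 2000000 in
/-- **Nonrealizability of the Hamilton HK AOF orientation `NR₃⁶` of the graph of
`C₆(9)^Δ`**: no admissible extended-Gale configuration for `C₆(9)` with lifting heights
realizes the vertex ordering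
`038 < 238 < 236 < 036 < 016 < 056 < 256 < 567 < 367 < 167 < 678 < 078 < 278 < 478 < 147 < 127 < 123 < 012 < 125 < 258 < 058 < 458 < 456 < 145 < 345 < 347 < 234 < 034 < 014 < 018`. -/
theorem NR36_not_realizable :
    ¬ ∃ (w : Fin 9 → ℝ × ℝ) (h : Fin 9 → ℝ),
      AdmissibleC69 w ∧
      (zC69 w h 0 3 8 < zC69 w h 2 3 8 ∧
       zC69 w h 2 3 8 < zC69 w h 2 3 6 ∧
       zC69 w h 2 3 6 < zC69 w h 0 3 6 ∧
       zC69 w h 0 3 6 < zC69 w h 0 1 6 ∧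
       zC69 w h 0 1 6 < zC69 w h 0 5 6 ∧
       zC69 w h 0 5 6 < zC69 w h 2 5 6 ∧
       zC69 w h 2 5 6 < zC69 w h 5 6 7 ∧
       zC69 w h 5 6 7 < zC69 w h 3 6 7 ∧
       zC69 w h 3 6 7 < zC69 w h 1 6 7 ∧
       zC69 w h 1 6 7 < zC69 w h 6 7 8 ∧
       zC69 w h 6 7 8 < zC69 w h 0 7 8 ∧
       zC69 w h 0 7 8 < zC69 w h 2 7 8 ∧
       zC69 w h 2 7 8 < zC69 w h 4 7 8 ∧
       zC69 w h 4 7 8 < zC69 w h 1 4 7 ∧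
       zC69 w h 1 4 7 < zC69 w h 1 2 7 ∧
       zC69 w h 1 2 7 < zC69 w h 1 2 3 ∧
       zC69 w h 1 2 3 < zC69 w h 0 1 2 ∧
       zC69 w h 0 1 2 < zC69 w h 1 2 5 ∧
       zC69 w h 1 2 5 < zC69 w h 2 5 8 ∧
       zC69 w h 2 5 8 < zC69 w h 0 5 8 ∧
       zC69 w h 0 5 8 < zC69 w h 4 5 8 ∧
       zC69 w h 4 5 8 < zC69 w h 4 5 6 ∧
       zC69 w h 4 5 6 < zC69 w h 1 4 5 ∧
       zC69 w h 1 4 5 < zC69 w h 3 4 5 ∧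
       zC69 w h 3 4 5 < zC69 w h 3 4 7 ∧
       zC69 w h 3 4 7 < zC69 w h 2 3 4 ∧
       zC69 w h 2 3 4 < zC69 w h 0 3 4 ∧
       zC69 w h 0 3 4 < zC69 w h 0 1 4 ∧
       zC69 w h 0 1 4 < zC69 w h 0 1 8) := by
  rintro ⟨w, h, hadm, hz⟩
  obtain ⟨-, hint, htd⟩ := hadm
  obtain ⟨hz0, hz1, hz2, hz3, hz4, hz5, hz6, hz7, hz8, hz9, hz10, hz11, hz12, hz13, hz14, hz15, hz16, hz17, hz18, hz19, hz20, hz21, hz22, hz23, hz24, hz25, hz26, hz27, hz28⟩ := hz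
  have hT012 : 0 < tdet (w 0) (w 1) (w 2) := htd 0 1 2 (by unfold C69triples; repeat (first | exact Set.mem_insert _ _ | apply Set.mem_insert_of_mem | exact rfl))
  have hT014 : 0 < tdet (w 0) (w 1) (w 4) := htd 0 1 4 (by unfold C69triples; repeat (first | exact Set.mem_insert _ _ | apply Set.mem_insert_of_mem | exact rfl))
  have hT016 : 0 < tdet (w 0) (w 1) (w 6) := htd 0 1 6 (by unfold C69triples; repeat (first | exact Set.mem_insert _ _ | apply Set.mem_insert_of_mem | exact rfl))
  have hT018 : 0 < tdet (w 0) (w 1) (w 8) := htd 0 1 8 (by unfold C69triples; repeat (first | exact Set.mem_insert _ _ | apply Set.mem_insert_of_mem | exact rfl))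
  have hT034 : 0 < tdet (w 0) (w 3) (w 4) := htd 0 3 4 (by unfold C69triples; repeat (first | exact Set.mem_insert _ _ | apply Set.mem_insert_of_mem | exact rfl))
  have hT036 : 0 < tdet (w 0) (w 3) (w 6) := htd 0 3 6 (by unfold C69triples; repeat (first | exact Set.mem_insert _ _ | apply Set.mem_insert_of_mem | exact rfl))
  have hT038 : 0 < tdet (w 0) (w 3) (w 8) := htd 0 3 8 (by unfold C69triples; repeat (first | exact Set.mem_insert _ _ | apply Set.mem_insert_of_mem | exact rfl))
  have hT056 : 0 < tdet (w 0) (w 5) (w 6) := htd 0 5 6 (by unfold C69triples; repeat (first | exact Set.mem_insert _ _ | apply Set.mem_insert_of_mem | exact rfl))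
  have hT058 : 0 < tdet (w 0) (w 5) (w 8) := htd 0 5 8 (by unfold C69triples; repeat (first | exact Set.mem_insert _ _ | apply Set.mem_insert_of_mem | exact rfl))
  have hT078 : 0 < tdet (w 0) (w 7) (w 8) := htd 0 7 8 (by unfold C69triples; repeat (first | exact Set.mem_insert _ _ | apply Set.mem_insert_of_mem | exact rfl))
  have hT123 : 0 < tdet (w 1) (w 2) (w 3) := htd 1 2 3 (by unfold C69triples; repeat (first | exact Set.mem_insert _ _ | apply Set.mem_insert_of_mem | exact rfl))
  have hT125 : 0 < tdet (w 1) (w 2) (w 5) := htd 1 2 5 (by unfold C69triples; repeat (first | exact Set.mem_insert _ _ | apply Set.mem_insert_of_mem | exact rfl))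
  have hT127 : 0 < tdet (w 1) (w 2) (w 7) := htd 1 2 7 (by unfold C69triples; repeat (first | exact Set.mem_insert _ _ | apply Set.mem_insert_of_mem | exact rfl))
  have hT145 : 0 < tdet (w 1) (w 4) (w 5) := htd 1 4 5 (by unfold C69triples; repeat (first | exact Set.mem_insert _ _ | apply Set.mem_insert_of_mem | exact rfl))
  have hT147 : 0 < tdet (w 1) (w 4) (w 7) := htd 1 4 7 (by unfold C69triples; repeat (first | exact Set.mem_insert _ _ | apply Set.mem_insert_of_mem | exact rfl))
  have hT167 : 0 < tdet (w 1) (w 6) (w 7) := htd 1 6 7 (by unfold C69triples; repeat (first | exact Set.mem_insert _ _ | apply Set.mem_insert_of_mem | exact rfl))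
  have hT234 : 0 < tdet (w 2) (w 3) (w 4) := htd 2 3 4 (by unfold C69triples; repeat (first | exact Set.mem_insert _ _ | apply Set.mem_insert_of_mem | exact rfl))
  have hT236 : 0 < tdet (w 2) (w 3) (w 6) := htd 2 3 6 (by unfold C69triples; repeat (first | exact Set.mem_insert _ _ | apply Set.mem_insert_of_mem | exact rfl))
  have hT238 : 0 < tdet (w 2) (w 3) (w 8) := htd 2 3 8 (by unfold C69triples; repeat (first | exact Set.mem_insert _ _ | apply Set.mem_insert_of_mem | exact rfl))
  have hT256 : 0 < tdet (w 2) (w 5) (w 6) := htd 2 5 6 (by unfold C69triples; repeat (first | exact Set.mem_insert _ _ | apply Set.mem_insert_of_mem | exact rfl))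
  have hT258 : 0 < tdet (w 2) (w 5) (w 8) := htd 2 5 8 (by unfold C69triples; repeat (first | exact Set.mem_insert _ _ | apply Set.mem_insert_of_mem | exact rfl))
  have hT278 : 0 < tdet (w 2) (w 7) (w 8) := htd 2 7 8 (by unfold C69triples; repeat (first | exact Set.mem_insert _ _ | apply Set.mem_insert_of_mem | exact rfl))
  have hT345 : 0 < tdet (w 3) (w 4) (w 5) := htd 3 4 5 (by unfold C69triples; repeat (first | exact Set.mem_insert _ _ | apply Set.mem_insert_of_mem | exact rfl))
  have hT347 : 0 < tdet (w 3) (w 4) (w 7) := htd 3 4 7 (by unfold C69triples; repeat (first | exact Set.mem_insert _ _ | apply Set.mem_insert_of_mem | exact rfl))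
  have hT367 : 0 < tdet (w 3) (w 6) (w 7) := htd 3 6 7 (by unfold C69triples; repeat (first | exact Set.mem_insert _ _ | apply Set.mem_insert_of_mem | exact rfl))
  have hT456 : 0 < tdet (w 4) (w 5) (w 6) := htd 4 5 6 (by unfold C69triples; repeat (first | exact Set.mem_insert _ _ | apply Set.mem_insert_of_mem | exact rfl))
  have hT458 : 0 < tdet (w 4) (w 5) (w 8) := htd 4 5 8 (by unfold C69triples; repeat (first | exact Set.mem_insert _ _ | apply Set.mem_insert_of_mem | exact rfl))
  have hT478 : 0 < tdet (w 4) (w 7) (w 8) := htd 4 7 8 (by unfold C69triples; repeat (first | exact Set.mem_insert _ _ | apply Set.mem_insert_of_mem | exact rfl))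
  have hT567 : 0 < tdet (w 5) (w 6) (w 7) := htd 5 6 7 (by unfold C69triples; repeat (first | exact Set.mem_insert _ _ | apply Set.mem_insert_of_mem | exact rfl))
  have hT678 : 0 < tdet (w 6) (w 7) (w 8) := htd 6 7 8 (by unfold C69triples; repeat (first | exact Set.mem_insert _ _ | apply Set.mem_insert_of_mem | exact rfl))
  have hG012 := gale3 (w 0) (w 1) (w 2) ((hint 0 1 2 (by decide) (by decide)).mpr (by unfold C69triples; repeat (first | exact Set.mem_insert _ _ | apply Set.mem_insert_of_mem | exact rfl))) hT012
  have hG014 := gale3 (w 0) (w 1) (w 4) ((hint 0 1 4 (by decide) (by decide)).mpr (by unfold C69triples; repeat (first | exact Set.mem_insert _ _ | apply Set.mem_insert_of_mem | exact rfl))) hT014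
  have hG016 := gale3 (w 0) (w 1) (w 6) ((hint 0 1 6 (by decide) (by decide)).mpr (by unfold C69triples; repeat (first | exact Set.mem_insert _ _ | apply Set.mem_insert_of_mem | exact rfl))) hT016
  have hG034 := gale3 (w 0) (w 3) (w 4) ((hint 0 3 4 (by decide) (by decide)).mpr (by unfold C69triples; repeat (first | exact Set.mem_insert _ _ | apply Set.mem_insert_of_mem | exact rfl))) hT034
  have hG036 := gale3 (w 0) (w 3) (w 6) ((hint 0 3 6 (by decide) (by decide)).mpr (by unfold C69triples; repeat (first | exact Set.mem_insert _ _ | apply Set.mem_insert_of_mem | exact rfl))) hT036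
  have hG038 := gale3 (w 0) (w 3) (w 8) ((hint 0 3 8 (by decide) (by decide)).mpr (by unfold C69triples; repeat (first | exact Set.mem_insert _ _ | apply Set.mem_insert_of_mem | exact rfl))) hT038
  have hG056 := gale3 (w 0) (w 5) (w 6) ((hint 0 5 6 (by decide) (by decide)).mpr (by unfold C69triples; repeat (first | exact Set.mem_insert _ _ | apply Set.mem_insert_of_mem | exact rfl))) hT056
  have hG058 := gale3 (w 0) (w 5) (w 8) ((hint 0 5 8 (by decide) (by decide)).mpr (by unfold C69triples; repeat (first | exact Set.mem_insert _ _ | apply Set.mem_insert_of_mem | exact rfl))) hT058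
  have hG078 := gale3 (w 0) (w 7) (w 8) ((hint 0 7 8 (by decide) (by decide)).mpr (by unfold C69triples; repeat (first | exact Set.mem_insert _ _ | apply Set.mem_insert_of_mem | exact rfl))) hT078
  have hG123 := gale3 (w 1) (w 2) (w 3) ((hint 1 2 3 (by decide) (by decide)).mpr (by unfold C69triples; repeat (first | exact Set.mem_insert _ _ | apply Set.mem_insert_of_mem | exact rfl))) hT123
  have hG125 := gale3 (w 1) (w 2) (w 5) ((hint 1 2 5 (by decide) (by decide)).mpr (by unfold C69triples; repeat (first | exact Set.mem_insert _ _ | apply Set.mem_insert_of_mem | exact rfl))) hT125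
  have hG127 := gale3 (w 1) (w 2) (w 7) ((hint 1 2 7 (by decide) (by decide)).mpr (by unfold C69triples; repeat (first | exact Set.mem_insert _ _ | apply Set.mem_insert_of_mem | exact rfl))) hT127
  have hG145 := gale3 (w 1) (w 4) (w 5) ((hint 1 4 5 (by decide) (by decide)).mpr (by unfold C69triples; repeat (first | exact Set.mem_insert _ _ | apply Set.mem_insert_of_mem | exact rfl))) hT145
  have hG147 := gale3 (w 1) (w 4) (w 7) ((hint 1 4 7 (by decide) (by decide)).mpr (by unfold C69triples; repeat (first | exact Set.mem_insert _ _ | apply Set.mem_insert_of_mem | exact rfl))) hT147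
  have hG167 := gale3 (w 1) (w 6) (w 7) ((hint 1 6 7 (by decide) (by decide)).mpr (by unfold C69triples; repeat (first | exact Set.mem_insert _ _ | apply Set.mem_insert_of_mem | exact rfl))) hT167
  have hB38 : 0 < dperp (w 3) (w 8) := hG038.2.1
  have hB23 : 0 < dperp (w 2) (w 3) := hG123.2.1
  have hB36 : 0 < dperp (w 3) (w 6) := hG036.2.1
  have hB60 : 0 < dperp (w 6) (w 0) := hG016.2.2
  have hB56 : 0 < dperp (w 5) (w 6) := hG056.2.1
  have hB67 : 0 < dperp (w 6) (w 7) := hG167.2.1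
  have hB78 : 0 < dperp (w 7) (w 8) := hG078.2.1
  have hB47 : 0 < dperp (w 4) (w 7) := hG147.2.1
  have hB71 : 0 < dperp (w 7) (w 1) := hG127.2.2
  have hB12 : 0 < dperp (w 1) (w 2) := hG012.2.1
  have hB25 : 0 < dperp (w 2) (w 5) := hG125.2.1
  have hB58 : 0 < dperp (w 5) (w 8) := hG058.2.1
  have hB45 : 0 < dperp (w 4) (w 5) := hG145.2.1
  have hB34 : 0 < dperp (w 3) (w 4) := hG034.2.1
  have hB40 : 0 < dperp (w 4) (w 0) := hG014.2.2
  have hB01 : 0 < dperp (w 0) (w 1) := hG012.1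
  simp only [zC69, iheight] at hz0
  rw [div_lt_div_iff₀ hT038 hT238] at hz0
  have hid0 : (dperp (w 0) (w 3) * h 8 + dperp (w 8) (w 0) * h 3 + dperp (w 3) (w 8) * h 0) * tdet (w 2) (w 3) (w 8) - (dperp (w 2) (w 3) * h 8 + dperp (w 8) (w 2) * h 3 + dperp (w 3) (w 8) * h 2) * tdet (w 0) (w 3) (w 8) = (dperp (w 3) (w 8) * Vdet (w 0) (w 2) (w 3) (w 8) (h 0) (h 2) (h 3) (h 8)) := by
    simp only [dperp, tdet, Vdet]; ring
  have hpr0 : dperp (w 3) (w 8) * Vdet (w 0) (w 2) (w 3) (w 8) (h 0) (h 2) (h 3) (h 8) < 0 := by linarith only [hz0, hid0]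
  have hV0238 : Vdet (w 0) (w 2) (w 3) (w 8) (h 0) (h 2) (h 3) (h 8) < 0 := sign1 hB38 hpr0
  simp only [zC69, iheight] at hz1
  rw [div_lt_div_iff₀ hT238 hT236] at hz1
  have hid1 : (dperp (w 2) (w 3) * h 8 + dperp (w 8) (w 2) * h 3 + dperp (w 3) (w 8) * h 2) * tdet (w 2) (w 3) (w 6) - (dperp (w 2) (w 3) * h 6 + dperp (w 6) (w 2) * h 3 + dperp (w 3) (w 6) * h 2) * tdet (w 2) (w 3) (w 8) = -(dperp (w 2) (w 3) * Vdet (w 2) (w 3) (w 6) (w 8) (h 2) (h 3) (h 6) (h 8)) := by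
    simp only [dperp, tdet, Vdet]; ring
  have hpr1 : 0 < dperp (w 2) (w 3) * Vdet (w 2) (w 3) (w 6) (w 8) (h 2) (h 3) (h 6) (h 8) := by linarith only [hz1, hid1]
  have hV2368 : 0 < Vdet (w 2) (w 3) (w 6) (w 8) (h 2) (h 3) (h 6) (h 8) := sign2 hB23 hpr1
  simp only [zC69, iheight] at hz2
  rw [div_lt_div_iff₀ hT236 hT036] at hz2
  have hid2 : (dperp (w 2) (w 3) * h 6 + dperp (w 6) (w 2) * h 3 + dperp (w 3) (w 6) * h 2) * tdet (w 0) (w 3) (w 6) - (dperp (w 0) (w 3) * h 6 + dperp (w 6) (w 0) * h 3 + dperp (w 3) (w 6) * h 0) * tdet (w 2) (w 3) (w 6) = -(dperp (w 3) (w 6) * Vdet (w 0) (w 2) (w 3) (w 6) (h 0) (h 2) (h 3) (h 6)) := by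
    simp only [dperp, tdet, Vdet]; ring
  have hpr2 : 0 < dperp (w 3) (w 6) * Vdet (w 0) (w 2) (w 3) (w 6) (h 0) (h 2) (h 3) (h 6) := by linarith only [hz2, hid2]
  have hV0236 : 0 < Vdet (w 0) (w 2) (w 3) (w 6) (h 0) (h 2) (h 3) (h 6) := sign2 hB36 hpr2
  simp only [zC69, iheight] at hz3
  rw [div_lt_div_iff₀ hT036 hT016] at hz3
  have hid3 : (dperp (w 0) (w 3) * h 6 + dperp (w 6) (w 0) * h 3 + dperp (w 3) (w 6) * h 0) * tdet (w 0) (w 1) (w 6) - (dperp (w 0) (w 1) * h 6 + dperp (w 6) (w 0) * h 1 + dperp (w 1) (w 6) * h 0) * tdet (w 0) (w 3) (w 6) = (dperp (w 6) (w 0) * Vdet (w 0) (w 1) (w 3) (w 6) (h 0) (h 1) (h 3) (h 6)) := by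
    simp only [dperp, tdet, Vdet]; ring
  have hpr3 : dperp (w 6) (w 0) * Vdet (w 0) (w 1) (w 3) (w 6) (h 0) (h 1) (h 3) (h 6) < 0 := by linarith only [hz3, hid3]
  have hV0136 : Vdet (w 0) (w 1) (w 3) (w 6) (h 0) (h 1) (h 3) (h 6) < 0 := sign1 hB60 hpr3
  simp only [zC69, iheight] at hz4
  rw [div_lt_div_iff₀ hT016 hT056] at hz4
  have hid4 : (dperp (w 0) (w 1) * h 6 + dperp (w 6) (w 0) * h 1 + dperp (w 1) (w 6) * h 0) * tdet (w 0) (w 5) (w 6) - (dperp (w 0) (w 5) * h 6 + dperp (w 6) (w 0) * h 5 + dperp (w 5) (w 6) * h 0) * tdet (w 0) (w 1) (w 6) = -(dperp (w 6) (w 0) * Vdet (w 0) (w 1) (w 5) (w 6) (h 0) (h 1) (h 5) (h 6)) := by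
    simp only [dperp, tdet, Vdet]; ring
  have hpr4 : 0 < dperp (w 6) (w 0) * Vdet (w 0) (w 1) (w 5) (w 6) (h 0) (h 1) (h 5) (h 6) := by linarith only [hz4, hid4]
  have hV0156 : 0 < Vdet (w 0) (w 1) (w 5) (w 6) (h 0) (h 1) (h 5) (h 6) := sign2 hB60 hpr4
  simp only [zC69, iheight] at hz5
  rw [div_lt_div_iff₀ hT056 hT256] at hz5
  have hid5 : (dperp (w 0) (w 5) * h 6 + dperp (w 6) (w 0) * h 5 + dperp (w 5) (w 6) * h 0) * tdet (w 2) (w 5) (w 6) - (dperp (w 2) (w 5) * h 6 + dperp (w 6) (w 2) * h 5 + dperp (w 5) (w 6) * h 2) * tdet (w 0) (w 5) (w 6) = (dperp (w 5) (w 6) * Vdet (w 0) (w 2) (w 5) (w 6) (h 0) (h 2) (h 5) (h 6)) := by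
    simp only [dperp, tdet, Vdet]; ring
  have hpr5 : dperp (w 5) (w 6) * Vdet (w 0) (w 2) (w 5) (w 6) (h 0) (h 2) (h 5) (h 6) < 0 := by linarith only [hz5, hid5]
  have hV0256 : Vdet (w 0) (w 2) (w 5) (w 6) (h 0) (h 2) (h 5) (h 6) < 0 := sign1 hB56 hpr5
  simp only [zC69, iheight] at hz6
  rw [div_lt_div_iff₀ hT256 hT567] at hz6
  have hid6 : (dperp (w 2) (w 5) * h 6 + dperp (w 6) (w 2) * h 5 + dperp (w 5) (w 6) * h 2) * tdet (w 5) (w 6) (w 7) - (dperp (w 5) (w 6) * h 7 + dperp (w 7) (w 5) * h 6 + dperp (w 6) (w 7) * h 5) * tdet (w 2) (w 5) (w 6) = (dperp (w 5) (w 6) * Vdet (w 2) (w 5) (w 6) (w 7) (h 2) (h 5) (h 6) (h 7)) := by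
    simp only [dperp, tdet, Vdet]; ring
  have hpr6 : dperp (w 5) (w 6) * Vdet (w 2) (w 5) (w 6) (w 7) (h 2) (h 5) (h 6) (h 7) < 0 := by linarith only [hz6, hid6]
  have hV2567 : Vdet (w 2) (w 5) (w 6) (w 7) (h 2) (h 5) (h 6) (h 7) < 0 := sign1 hB56 hpr6
  simp only [zC69, iheight] at hz7
  rw [div_lt_div_iff₀ hT567 hT367] at hz7
  have hid7 : (dperp (w 5) (w 6) * h 7 + dperp (w 7) (w 5) * h 6 + dperp (w 6) (w 7) * h 5) * tdet (w 3) (w 6) (w 7) - (dperp (w 3) (w 6) * h 7 + dperp (w 7) (w 3) * h 6 + dperp (w 6) (w 7) * h 3) * tdet (w 5) (w 6) (w 7) = -(dperp (w 6) (w 7) * Vdet (w 3) (w 5) (w 6) (w 7) (h 3) (h 5) (h 6) (h 7)) := by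
    simp only [dperp, tdet, Vdet]; ring
  have hpr7 : 0 < dperp (w 6) (w 7) * Vdet (w 3) (w 5) (w 6) (w 7) (h 3) (h 5) (h 6) (h 7) := by linarith only [hz7, hid7]
  have hV3567 : 0 < Vdet (w 3) (w 5) (w 6) (w 7) (h 3) (h 5) (h 6) (h 7) := sign2 hB67 hpr7
  simp only [zC69, iheight] at hz8
  rw [div_lt_div_iff₀ hT367 hT167] at hz8
  have hid8 : (dperp (w 3) (w 6) * h 7 + dperp (w 7) (w 3) * h 6 + dperp (w 6) (w 7) * h 3) * tdet (w 1) (w 6) (w 7) - (dperp (w 1) (w 6) * h 7 + dperp (w 7) (w 1) * h 6 + dperp (w 6) (w 7) * h 1) * tdet (w 3) (w 6) (w 7) = -(dperp (w 6) (w 7) * Vdet (w 1) (w 3) (w 6) (w 7) (h 1) (h 3) (h 6) (h 7)) := by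
    simp only [dperp, tdet, Vdet]; ring
  have hpr8 : 0 < dperp (w 6) (w 7) * Vdet (w 1) (w 3) (w 6) (w 7) (h 1) (h 3) (h 6) (h 7) := by linarith only [hz8, hid8]
  have hV1367 : 0 < Vdet (w 1) (w 3) (w 6) (w 7) (h 1) (h 3) (h 6) (h 7) := sign2 hB67 hpr8
  simp only [zC69, iheight] at hz9
  rw [div_lt_div_iff₀ hT167 hT678] at hz9
  have hid9 : (dperp (w 1) (w 6) * h 7 + dperp (w 7) (w 1) * h 6 + dperp (w 6) (w 7) * h 1) * tdet (w 6) (w 7) (w 8) - (dperp (w 6) (w 7) * h 8 + dperp (w 8) (w 6) * h 7 + dperp (w 7) (w 8) * h 6) * tdet (w 1) (w 6) (w 7) = (dperp (w 6) (w 7) * Vdet (w 1) (w 6) (w 7) (w 8) (h 1) (h 6) (h 7) (h 8)) := by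
    simp only [dperp, tdet, Vdet]; ring
  have hpr9 : dperp (w 6) (w 7) * Vdet (w 1) (w 6) (w 7) (w 8) (h 1) (h 6) (h 7) (h 8) < 0 := by linarith only [hz9, hid9]
  have hV1678 : Vdet (w 1) (w 6) (w 7) (w 8) (h 1) (h 6) (h 7) (h 8) < 0 := sign1 hB67 hpr9
  simp only [zC69, iheight] at hz10
  rw [div_lt_div_iff₀ hT678 hT078] at hz10
  have hid10 : (dperp (w 6) (w 7) * h 8 + dperp (w 8) (w 6) * h 7 + dperp (w 7) (w 8) * h 6) * tdet (w 0) (w 7) (w 8) - (dperp (w 0) (w 7) * h 8 + dperp (w 8) (w 0) * h 7 + dperp (w 7) (w 8) * h 0) * tdet (w 6) (w 7) (w 8) = -(dperp (w 7) (w 8) * Vdet (w 0) (w 6) (w 7) (w 8) (h 0) (h 6) (h 7) (h 8)) := by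
    simp only [dperp, tdet, Vdet]; ring
  have hpr10 : 0 < dperp (w 7) (w 8) * Vdet (w 0) (w 6) (w 7) (w 8) (h 0) (h 6) (h 7) (h 8) := by linarith only [hz10, hid10]
  have hV0678 : 0 < Vdet (w 0) (w 6) (w 7) (w 8) (h 0) (h 6) (h 7) (h 8) := sign2 hB78 hpr10
  simp only [zC69, iheight] at hz11
  rw [div_lt_div_iff₀ hT078 hT278] at hz11
  have hid11 : (dperp (w 0) (w 7) * h 8 + dperp (w 8) (w 0) * h 7 + dperp (w 7) (w 8) * h 0) * tdet (w 2) (w 7) (w 8) - (dperp (w 2) (w 7) * h 8 + dperp (w 8) (w 2) * h 7 + dperp (w 7) (w 8) * h 2) * tdet (w 0) (w 7) (w 8) = (dperp (w 7) (w 8) * Vdet (w 0) (w 2) (w 7) (w 8) (h 0) (h 2) (h 7) (h 8)) := by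
    simp only [dperp, tdet, Vdet]; ring
  have hpr11 : dperp (w 7) (w 8) * Vdet (w 0) (w 2) (w 7) (w 8) (h 0) (h 2) (h 7) (h 8) < 0 := by linarith only [hz11, hid11]
  have hV0278 : Vdet (w 0) (w 2) (w 7) (w 8) (h 0) (h 2) (h 7) (h 8) < 0 := sign1 hB78 hpr11
  simp only [zC69, iheight] at hz12
  rw [div_lt_div_iff₀ hT278 hT478] at hz12
  have hid12 : (dperp (w 2) (w 7) * h 8 + dperp (w 8) (w 2) * h 7 + dperp (w 7) (w 8) * h 2) * tdet (w 4) (w 7) (w 8) - (dperp (w 4) (w 7) * h 8 + dperp (w 8) (w 4) * h 7 + dperp (w 7) (w 8) * h 4) * tdet (w 2) (w 7) (w 8) = (dperp (w 7) (w 8) * Vdet (w 2) (w 4) (w 7) (w 8) (h 2) (h 4) (h 7) (h 8)) := by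
    simp only [dperp, tdet, Vdet]; ring
  have hpr12 : dperp (w 7) (w 8) * Vdet (w 2) (w 4) (w 7) (w 8) (h 2) (h 4) (h 7) (h 8) < 0 := by linarith only [hz12, hid12]
  have hV2478 : Vdet (w 2) (w 4) (w 7) (w 8) (h 2) (h 4) (h 7) (h 8) < 0 := sign1 hB78 hpr12
  simp only [zC69, iheight] at hz13
  rw [div_lt_div_iff₀ hT478 hT147] at hz13
  have hid13 : (dperp (w 4) (w 7) * h 8 + dperp (w 8) (w 4) * h 7 + dperp (w 7) (w 8) * h 4) * tdet (w 1) (w 4) (w 7) - (dperp (w 1) (w 4) * h 7 + dperp (w 7) (w 1) * h 4 + dperp (w 4) (w 7) * h 1) * tdet (w 4) (w 7) (w 8) = -(dperp (w 4) (w 7) * Vdet (w 1) (w 4) (w 7) (w 8) (h 1) (h 4) (h 7) (h 8)) := by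
    simp only [dperp, tdet, Vdet]; ring
  have hpr13 : 0 < dperp (w 4) (w 7) * Vdet (w 1) (w 4) (w 7) (w 8) (h 1) (h 4) (h 7) (h 8) := by linarith only [hz13, hid13]
  have hV1478 : 0 < Vdet (w 1) (w 4) (w 7) (w 8) (h 1) (h 4) (h 7) (h 8) := sign2 hB47 hpr13
  simp only [zC69, iheight] at hz14
  rw [div_lt_div_iff₀ hT147 hT127] at hz14
  have hid14 : (dperp (w 1) (w 4) * h 7 + dperp (w 7) (w 1) * h 4 + dperp (w 4) (w 7) * h 1) * tdet (w 1) (w 2) (w 7) - (dperp (w 1) (w 2) * h 7 + dperp (w 7) (w 1) * h 2 + dperp (w 2) (w 7) * h 1) * tdet (w 1) (w 4) (w 7) = (dperp (w 7) (w 1) * Vdet (w 1) (w 2) (w 4) (w 7) (h 1) (h 2) (h 4) (h 7)) := by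
    simp only [dperp, tdet, Vdet]; ring
  have hpr14 : dperp (w 7) (w 1) * Vdet (w 1) (w 2) (w 4) (w 7) (h 1) (h 2) (h 4) (h 7) < 0 := by linarith only [hz14, hid14]
  have hV1247 : Vdet (w 1) (w 2) (w 4) (w 7) (h 1) (h 2) (h 4) (h 7) < 0 := sign1 hB71 hpr14
  simp only [zC69, iheight] at hz15
  rw [div_lt_div_iff₀ hT127 hT123] at hz15
  have hid15 : (dperp (w 1) (w 2) * h 7 + dperp (w 7) (w 1) * h 2 + dperp (w 2) (w 7) * h 1) * tdet (w 1) (w 2) (w 3) - (dperp (w 1) (w 2) * h 3 + dperp (w 3) (w 1) * h 2 + dperp (w 2) (w 3) * h 1) * tdet (w 1) (w 2) (w 7) = -(dperp (w 1) (w 2) * Vdet (w 1) (w 2) (w 3) (w 7) (h 1) (h 2) (h 3) (h 7)) := by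
    simp only [dperp, tdet, Vdet]; ring
  have hpr15 : 0 < dperp (w 1) (w 2) * Vdet (w 1) (w 2) (w 3) (w 7) (h 1) (h 2) (h 3) (h 7) := by linarith only [hz15, hid15]
  have hV1237 : 0 < Vdet (w 1) (w 2) (w 3) (w 7) (h 1) (h 2) (h 3) (h 7) := sign2 hB12 hpr15
  simp only [zC69, iheight] at hz16
  rw [div_lt_div_iff₀ hT123 hT012] at hz16
  have hid16 : (dperp (w 1) (w 2) * h 3 + dperp (w 3) (w 1) * h 2 + dperp (w 2) (w 3) * h 1) * tdet (w 0) (w 1) (w 2) - (dperp (w 0) (w 1) * h 2 + dperp (w 2) (w 0) * h 1 + dperp (w 1) (w 2) * h 0) * tdet (w 1) (w 2) (w 3) = -(dperp (w 1) (w 2) * Vdet (w 0) (w 1) (w 2) (w 3) (h 0) (h 1) (h 2) (h 3)) := by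
    simp only [dperp, tdet, Vdet]; ring
  have hpr16 : 0 < dperp (w 1) (w 2) * Vdet (w 0) (w 1) (w 2) (w 3) (h 0) (h 1) (h 2) (h 3) := by linarith only [hz16, hid16]
  have hV0123 : 0 < Vdet (w 0) (w 1) (w 2) (w 3) (h 0) (h 1) (h 2) (h 3) := sign2 hB12 hpr16
  simp only [zC69, iheight] at hz17
  rw [div_lt_div_iff₀ hT012 hT125] at hz17
  have hid17 : (dperp (w 0) (w 1) * h 2 + dperp (w 2) (w 0) * h 1 + dperp (w 1) (w 2) * h 0) * tdet (w 1) (w 2) (w 5) - (dperp (w 1) (w 2) * h 5 + dperp (w 5) (w 1) * h 2 + dperp (w 2) (w 5) * h 1) * tdet (w 0) (w 1) (w 2) = (dperp (w 1) (w 2) * Vdet (w 0) (w 1) (w 2) (w 5) (h 0) (h 1) (h 2) (h 5)) := by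
    simp only [dperp, tdet, Vdet]; ring
  have hpr17 : dperp (w 1) (w 2) * Vdet (w 0) (w 1) (w 2) (w 5) (h 0) (h 1) (h 2) (h 5) < 0 := by linarith only [hz17, hid17]
  have hV0125 : Vdet (w 0) (w 1) (w 2) (w 5) (h 0) (h 1) (h 2) (h 5) < 0 := sign1 hB12 hpr17
  simp only [zC69, iheight] at hz18
  rw [div_lt_div_iff₀ hT125 hT258] at hz18
  have hid18 : (dperp (w 1) (w 2) * h 5 + dperp (w 5) (w 1) * h 2 + dperp (w 2) (w 5) * h 1) * tdet (w 2) (w 5) (w 8) - (dperp (w 2) (w 5) * h 8 + dperp (w 8) (w 2) * h 5 + dperp (w 5) (w 8) * h 2) * tdet (w 1) (w 2) (w 5) = (dperp (w 2) (w 5) * Vdet (w 1) (w 2) (w 5) (w 8) (h 1) (h 2) (h 5) (h 8)) := by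
    simp only [dperp, tdet, Vdet]; ring
  have hpr18 : dperp (w 2) (w 5) * Vdet (w 1) (w 2) (w 5) (w 8) (h 1) (h 2) (h 5) (h 8) < 0 := by linarith only [hz18, hid18]
  have hV1258 : Vdet (w 1) (w 2) (w 5) (w 8) (h 1) (h 2) (h 5) (h 8) < 0 := sign1 hB25 hpr18
  simp only [zC69, iheight] at hz19
  rw [div_lt_div_iff₀ hT258 hT058] at hz19
  have hid19 : (dperp (w 2) (w 5) * h 8 + dperp (w 8) (w 2) * h 5 + dperp (w 5) (w 8) * h 2) * tdet (w 0) (w 5) (w 8) - (dperp (w 0) (w 5) * h 8 + dperp (w 8) (w 0) * h 5 + dperp (w 5) (w 8) * h 0) * tdet (w 2) (w 5) (w 8) = -(dperp (w 5) (w 8) * Vdet (w 0) (w 2) (w 5) (w 8) (h 0) (h 2) (h 5) (h 8)) := by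
    simp only [dperp, tdet, Vdet]; ring
  have hpr19 : 0 < dperp (w 5) (w 8) * Vdet (w 0) (w 2) (w 5) (w 8) (h 0) (h 2) (h 5) (h 8) := by linarith only [hz19, hid19]
  have hV0258 : 0 < Vdet (w 0) (w 2) (w 5) (w 8) (h 0) (h 2) (h 5) (h 8) := sign2 hB58 hpr19
  simp only [zC69, iheight] at hz20
  rw [div_lt_div_iff₀ hT058 hT458] at hz20
  have hid20 : (dperp (w 0) (w 5) * h 8 + dperp (w 8) (w 0) * h 5 + dperp (w 5) (w 8) * h 0) * tdet (w 4) (w 5) (w 8) - (dperp (w 4) (w 5) * h 8 + dperp (w 8) (w 4) * h 5 + dperp (w 5) (w 8) * h 4) * tdet (w 0) (w 5) (w 8) = (dperp (w 5) (w 8) * Vdet (w 0) (w 4) (w 5) (w 8) (h 0) (h 4) (h 5) (h 8)) := by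
    simp only [dperp, tdet, Vdet]; ring
  have hpr20 : dperp (w 5) (w 8) * Vdet (w 0) (w 4) (w 5) (w 8) (h 0) (h 4) (h 5) (h 8) < 0 := by linarith only [hz20, hid20]
  have hV0458 : Vdet (w 0) (w 4) (w 5) (w 8) (h 0) (h 4) (h 5) (h 8) < 0 := sign1 hB58 hpr20
  simp only [zC69, iheight] at hz21
  rw [div_lt_div_iff₀ hT458 hT456] at hz21
  have hid21 : (dperp (w 4) (w 5) * h 8 + dperp (w 8) (w 4) * h 5 + dperp (w 5) (w 8) * h 4) * tdet (w 4) (w 5) (w 6) - (dperp (w 4) (w 5) * h 6 + dperp (w 6) (w 4) * h 5 + dperp (w 5) (w 6) * h 4) * tdet (w 4) (w 5) (w 8) = -(dperp (w 4) (w 5) * Vdet (w 4) (w 5) (w 6) (w 8) (h 4) (h 5) (h 6) (h 8)) := by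
    simp only [dperp, tdet, Vdet]; ring
  have hpr21 : 0 < dperp (w 4) (w 5) * Vdet (w 4) (w 5) (w 6) (w 8) (h 4) (h 5) (h 6) (h 8) := by linarith only [hz21, hid21]
  have hV4568 : 0 < Vdet (w 4) (w 5) (w 6) (w 8) (h 4) (h 5) (h 6) (h 8) := sign2 hB45 hpr21
  simp only [zC69, iheight] at hz22
  rw [div_lt_div_iff₀ hT456 hT145] at hz22
  have hid22 : (dperp (w 4) (w 5) * h 6 + dperp (w 6) (w 4) * h 5 + dperp (w 5) (w 6) * h 4) * tdet (w 1) (w 4) (w 5) - (dperp (w 1) (w 4) * h 5 + dperp (w 5) (w 1) * h 4 + dperp (w 4) (w 5) * h 1) * tdet (w 4) (w 5) (w 6) = -(dperp (w 4) (w 5) * Vdet (w 1) (w 4) (w 5) (w 6) (h 1) (h 4) (h 5) (h 6)) := by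
    simp only [dperp, tdet, Vdet]; ring
  have hpr22 : 0 < dperp (w 4) (w 5) * Vdet (w 1) (w 4) (w 5) (w 6) (h 1) (h 4) (h 5) (h 6) := by linarith only [hz22, hid22]
  have hV1456 : 0 < Vdet (w 1) (w 4) (w 5) (w 6) (h 1) (h 4) (h 5) (h 6) := sign2 hB45 hpr22
  simp only [zC69, iheight] at hz23
  rw [div_lt_div_iff₀ hT145 hT345] at hz23
  have hid23 : (dperp (w 1) (w 4) * h 5 + dperp (w 5) (w 1) * h 4 + dperp (w 4) (w 5) * h 1) * tdet (w 3) (w 4) (w 5) - (dperp (w 3) (w 4) * h 5 + dperp (w 5) (w 3) * h 4 + dperp (w 4) (w 5) * h 3) * tdet (w 1) (w 4) (w 5) = (dperp (w 4) (w 5) * Vdet (w 1) (w 3) (w 4) (w 5) (h 1) (h 3) (h 4) (h 5)) := by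
    simp only [dperp, tdet, Vdet]; ring
  have hpr23 : dperp (w 4) (w 5) * Vdet (w 1) (w 3) (w 4) (w 5) (h 1) (h 3) (h 4) (h 5) < 0 := by linarith only [hz23, hid23]
  have hV1345 : Vdet (w 1) (w 3) (w 4) (w 5) (h 1) (h 3) (h 4) (h 5) < 0 := sign1 hB45 hpr23
  simp only [zC69, iheight] at hz24
  rw [div_lt_div_iff₀ hT345 hT347] at hz24
  have hid24 : (dperp (w 3) (w 4) * h 5 + dperp (w 5) (w 3) * h 4 + dperp (w 4) (w 5) * h 3) * tdet (w 3) (w 4) (w 7) - (dperp (w 3) (w 4) * h 7 + dperp (w 7) (w 3) * h 4 + dperp (w 4) (w 7) * h 3) * tdet (w 3) (w 4) (w 5) = (dperp (w 3) (w 4) * Vdet (w 3) (w 4) (w 5) (w 7) (h 3) (h 4) (h 5) (h 7)) := by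
    simp only [dperp, tdet, Vdet]; ring
  have hpr24 : dperp (w 3) (w 4) * Vdet (w 3) (w 4) (w 5) (w 7) (h 3) (h 4) (h 5) (h 7) < 0 := by linarith only [hz24, hid24]
  have hV3457 : Vdet (w 3) (w 4) (w 5) (w 7) (h 3) (h 4) (h 5) (h 7) < 0 := sign1 hB34 hpr24
  simp only [zC69, iheight] at hz25
  rw [div_lt_div_iff₀ hT347 hT234] at hz25
  have hid25 : (dperp (w 3) (w 4) * h 7 + dperp (w 7) (w 3) * h 4 + dperp (w 4) (w 7) * h 3) * tdet (w 2) (w 3) (w 4) - (dperp (w 2) (w 3) * h 4 + dperp (w 4) (w 2) * h 3 + dperp (w 3) (w 4) * h 2) * tdet (w 3) (w 4) (w 7) = -(dperp (w 3) (w 4) * Vdet (w 2) (w 3) (w 4) (w 7) (h 2) (h 3) (h 4) (h 7)) := by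
    simp only [dperp, tdet, Vdet]; ring
  have hpr25 : 0 < dperp (w 3) (w 4) * Vdet (w 2) (w 3) (w 4) (w 7) (h 2) (h 3) (h 4) (h 7) := by linarith only [hz25, hid25]
  have hV2347 : 0 < Vdet (w 2) (w 3) (w 4) (w 7) (h 2) (h 3) (h 4) (h 7) := sign2 hB34 hpr25
  simp only [zC69, iheight] at hz26
  rw [div_lt_div_iff₀ hT234 hT034] at hz26
  have hid26 : (dperp (w 2) (w 3) * h 4 + dperp (w 4) (w 2) * h 3 + dperp (w 3) (w 4) * h 2) * tdet (w 0) (w 3) (w 4) - (dperp (w 0) (w 3) * h 4 + dperp (w 4) (w 0) * h 3 + dperp (w 3) (w 4) * h 0) * tdet (w 2) (w 3) (w 4) = -(dperp (w 3) (w 4) * Vdet (w 0) (w 2) (w 3) (w 4) (h 0) (h 2) (h 3) (h 4)) := by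
    simp only [dperp, tdet, Vdet]; ring
  have hpr26 : 0 < dperp (w 3) (w 4) * Vdet (w 0) (w 2) (w 3) (w 4) (h 0) (h 2) (h 3) (h 4) := by linarith only [hz26, hid26]
  have hV0234 : 0 < Vdet (w 0) (w 2) (w 3) (w 4) (h 0) (h 2) (h 3) (h 4) := sign2 hB34 hpr26
  simp only [zC69, iheight] at hz27
  rw [div_lt_div_iff₀ hT034 hT014] at hz27
  have hid27 : (dperp (w 0) (w 3) * h 4 + dperp (w 4) (w 0) * h 3 + dperp (w 3) (w 4) * h 0) * tdet (w 0) (w 1) (w 4) - (dperp (w 0) (w 1) * h 4 + dperp (w 4) (w 0) * h 1 + dperp (w 1) (w 4) * h 0) * tdet (w 0) (w 3) (w 4) = (dperp (w 4) (w 0) * Vdet (w 0) (w 1) (w 3) (w 4) (h 0) (h 1) (h 3) (h 4)) := by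
    simp only [dperp, tdet, Vdet]; ring
  have hpr27 : dperp (w 4) (w 0) * Vdet (w 0) (w 1) (w 3) (w 4) (h 0) (h 1) (h 3) (h 4) < 0 := by linarith only [hz27, hid27]
  have hV0134 : Vdet (w 0) (w 1) (w 3) (w 4) (h 0) (h 1) (h 3) (h 4) < 0 := sign1 hB40 hpr27
  simp only [zC69, iheight] at hz28
  rw [div_lt_div_iff₀ hT014 hT018] at hz28
  have hid28 : (dperp (w 0) (w 1) * h 4 + dperp (w 4) (w 0) * h 1 + dperp (w 1) (w 4) * h 0) * tdet (w 0) (w 1) (w 8) - (dperp (w 0) (w 1) * h 8 + dperp (w 8) (w 0) * h 1 + dperp (w 1) (w 8) * h 0) * tdet (w 0) (w 1) (w 4) = (dperp (w 0) (w 1) * Vdet (w 0) (w 1) (w 4) (w 8) (h 0) (h 1) (h 4) (h 8)) := by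
    simp only [dperp, tdet, Vdet]; ring
  have hpr28 : dperp (w 0) (w 1) * Vdet (w 0) (w 1) (w 4) (w 8) (h 0) (h 1) (h 4) (h 8) < 0 := by linarith only [hz28, hid28]
  have hV0148 : Vdet (w 0) (w 1) (w 4) (w 8) (h 0) (h 1) (h 4) (h 8) < 0 := sign1 hB01 hpr28
  have hidd1 : tdet (w 0) (w 2) (w 5) * Vdet (w 1) (w 2) (w 5) (w 8) (h 1) (h 2) (h 5) (h 8) - tdet (w 1) (w 2) (w 5) * Vdet (w 0) (w 2) (w 5) (w 8) (h 0) (h 2) (h 5) (h 8) + tdet (w 2) (w 5) (w 8) * Vdet (w 0) (w 1) (w 2) (w 5) (h 0) (h 1) (h 2) (h 5) = 0 := by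
    simp only [tdet, Vdet, dperp]; ring
  have hprd1 : 0 < Vdet (w 1) (w 2) (w 5) (w 8) (h 1) (h 2) (h 5) (h 8) * tdet (w 0) (w 2) (w 5) := by linarith only [hidd1, mul_pos hT125 hV0258, mul_neg_of_pos_of_neg hT258 hV0125]
  have hT025 : tdet (w 0) (w 2) (w 5) < 0 := sign4 hV1258 hprd1
  have hidd2 : tdet (w 0) (w 2) (w 5) * Vdet (w 2) (w 5) (w 6) (w 8) (h 2) (h 5) (h 6) (h 8) - tdet (w 2) (w 5) (w 6) * Vdet (w 0) (w 2) (w 5) (w 8) (h 0) (h 2) (h 5) (h 8) + tdet (w 2) (w 5) (w 8) * Vdet (w 0) (w 2) (w 5) (w 6) (h 0) (h 2) (h 5) (h 6) = 0 := by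
    simp only [tdet, Vdet, dperp]; ring
  have hprd2 : 0 < tdet (w 0) (w 2) (w 5) * Vdet (w 2) (w 5) (w 6) (w 8) (h 2) (h 5) (h 6) (h 8) := by linarith only [hidd2, mul_pos hT256 hV0258, mul_neg_of_pos_of_neg hT258 hV0256]
  have hV2568 : Vdet (w 2) (w 5) (w 6) (w 8) (h 2) (h 5) (h 6) (h 8) < 0 := sign4 hT025 hprd2
  have hidd3 : -tdet (w 0) (w 1) (w 6) * Vdet (w 0) (w 3) (w 5) (w 6) (h 0) (h 3) (h 5) (h 6) + tdet (w 0) (w 3) (w 6) * Vdet (w 0) (w 1) (w 5) (w 6) (h 0) (h 1) (h 5) (h 6) - tdet (w 0) (w 5) (w 6) * Vdet (w 0) (w 1) (w 3) (w 6) (h 0) (h 1) (h 3) (h 6) = 0 := by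
    simp only [tdet, Vdet, dperp]; ring
  have hprd3 : 0 < tdet (w 0) (w 1) (w 6) * Vdet (w 0) (w 3) (w 5) (w 6) (h 0) (h 3) (h 5) (h 6) := by linarith only [hidd3, mul_pos hT036 hV0156, mul_neg_of_pos_of_neg hT056 hV0136]
  have hV0356 : 0 < Vdet (w 0) (w 3) (w 5) (w 6) (h 0) (h 3) (h 5) (h 6) := sign2 hT016 hprd3
  have hidd4 : -tdet (w 0) (w 2) (w 6) * Vdet (w 0) (w 3) (w 5) (w 6) (h 0) (h 3) (h 5) (h 6) + tdet (w 0) (w 3) (w 6) * Vdet (w 0) (w 2) (w 5) (w 6) (h 0) (h 2) (h 5) (h 6) - tdet (w 0) (w 5) (w 6) * Vdet (w 0) (w 2) (w 3) (w 6) (h 0) (h 2) (h 3) (h 6) = 0 := by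
    simp only [tdet, Vdet, dperp]; ring
  have hprd4 : Vdet (w 0) (w 3) (w 5) (w 6) (h 0) (h 3) (h 5) (h 6) * tdet (w 0) (w 2) (w 6) < 0 := by linarith only [hidd4, mul_neg_of_pos_of_neg hT036 hV0256, mul_pos hT056 hV0236]
  have hT026 : tdet (w 0) (w 2) (w 6) < 0 := sign1 hV0356 hprd4
  have hidd5 : tdet (w 0) (w 2) (w 6) * Vdet (w 2) (w 3) (w 5) (w 6) (h 2) (h 3) (h 5) (h 6) - tdet (w 2) (w 3) (w 6) * Vdet (w 0) (w 2) (w 5) (w 6) (h 0) (h 2) (h 5) (h 6) + tdet (w 2) (w 5) (w 6) * Vdet (w 0) (w 2) (w 3) (w 6) (h 0) (h 2) (h 3) (h 6) = 0 := by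
    simp only [tdet, Vdet, dperp]; ring
  have hprd5 : tdet (w 0) (w 2) (w 6) * Vdet (w 2) (w 3) (w 5) (w 6) (h 2) (h 3) (h 5) (h 6) < 0 := by linarith only [hidd5, mul_neg_of_pos_of_neg hT236 hV0256, mul_pos hT256 hV0236]
  have hV2356 : 0 < Vdet (w 2) (w 3) (w 5) (w 6) (h 2) (h 3) (h 5) (h 6) := sign3 hT026 hprd5
  have hidd6 : tdet (w 2) (w 3) (w 6) * Vdet (w 2) (w 5) (w 6) (w 8) (h 2) (h 5) (h 6) (h 8) - tdet (w 2) (w 5) (w 6) * Vdet (w 2) (w 3) (w 6) (w 8) (h 2) (h 3) (h 6) (h 8) + tdet (w 2) (w 6) (w 8) * Vdet (w 2) (w 3) (w 5) (w 6) (h 2) (h 3) (h 5) (h 6) = 0 := by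
    simp only [tdet, Vdet, dperp]; ring
  have hprd6 : 0 < Vdet (w 2) (w 3) (w 5) (w 6) (h 2) (h 3) (h 5) (h 6) * tdet (w 2) (w 6) (w 8) := by linarith only [hidd6, mul_neg_of_pos_of_neg hT236 hV2568, mul_pos hT256 hV2368]
  have hT268 : 0 < tdet (w 2) (w 6) (w 8) := sign2 hV2356 hprd6
  have hidd7 : tdet (w 1) (w 6) (w 7) * Vdet (w 3) (w 5) (w 6) (w 7) (h 3) (h 5) (h 6) (h 7) - tdet (w 3) (w 6) (w 7) * Vdet (w 1) (w 5) (w 6) (w 7) (h 1) (h 5) (h 6) (h 7) + tdet (w 5) (w 6) (w 7) * Vdet (w 1) (w 3) (w 6) (w 7) (h 1) (h 3) (h 6) (h 7) = 0 := by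
    simp only [tdet, Vdet, dperp]; ring
  have hprd7 : 0 < tdet (w 3) (w 6) (w 7) * Vdet (w 1) (w 5) (w 6) (w 7) (h 1) (h 5) (h 6) (h 7) := by linarith only [hidd7, mul_pos hT167 hV3567, mul_pos hT567 hV1367]
  have hV1567 : 0 < Vdet (w 1) (w 5) (w 6) (w 7) (h 1) (h 5) (h 6) (h 7) := sign2 hT367 hprd7
  have hidd8 : tdet (w 1) (w 6) (w 7) * Vdet (w 5) (w 6) (w 7) (w 8) (h 5) (h 6) (h 7) (h 8) - tdet (w 5) (w 6) (w 7) * Vdet (w 1) (w 6) (w 7) (w 8) (h 1) (h 6) (h 7) (h 8) + tdet (w 6) (w 7) (w 8) * Vdet (w 1) (w 5) (w 6) (w 7) (h 1) (h 5) (h 6) (h 7) = 0 := by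
    simp only [tdet, Vdet, dperp]; ring
  have hprd8 : tdet (w 1) (w 6) (w 7) * Vdet (w 5) (w 6) (w 7) (w 8) (h 5) (h 6) (h 7) (h 8) < 0 := by linarith only [hidd8, mul_neg_of_pos_of_neg hT567 hV1678, mul_pos hT678 hV1567]
  have hV5678 : Vdet (w 5) (w 6) (w 7) (w 8) (h 5) (h 6) (h 7) (h 8) < 0 := sign1 hT167 hprd8
  have hidd9 : tdet (w 1) (w 4) (w 5) * Vdet (w 3) (w 4) (w 5) (w 6) (h 3) (h 4) (h 5) (h 6) - tdet (w 3) (w 4) (w 5) * Vdet (w 1) (w 4) (w 5) (w 6) (h 1) (h 4) (h 5) (h 6) + tdet (w 4) (w 5) (w 6) * Vdet (w 1) (w 3) (w 4) (w 5) (h 1) (h 3) (h 4) (h 5) = 0 := by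
    simp only [tdet, Vdet, dperp]; ring
  have hprd9 : 0 < tdet (w 1) (w 4) (w 5) * Vdet (w 3) (w 4) (w 5) (w 6) (h 3) (h 4) (h 5) (h 6) := by linarith only [hidd9, mul_pos hT345 hV1456, mul_neg_of_pos_of_neg hT456 hV1345]
  have hV3456 : 0 < Vdet (w 3) (w 4) (w 5) (w 6) (h 3) (h 4) (h 5) (h 6) := sign2 hT145 hprd9
  have hidd10 : tdet (w 0) (w 5) (w 6) * Vdet (w 2) (w 5) (w 6) (w 7) (h 2) (h 5) (h 6) (h 7) - tdet (w 2) (w 5) (w 6) * Vdet (w 0) (w 5) (w 6) (w 7) (h 0) (h 5) (h 6) (h 7) + tdet (w 5) (w 6) (w 7) * Vdet (w 0) (w 2) (w 5) (w 6) (h 0) (h 2) (h 5) (h 6) = 0 := by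
    simp only [tdet, Vdet, dperp]; ring
  have hprd10 : tdet (w 2) (w 5) (w 6) * Vdet (w 0) (w 5) (w 6) (w 7) (h 0) (h 5) (h 6) (h 7) < 0 := by linarith only [hidd10, mul_neg_of_pos_of_neg hT056 hV2567, mul_neg_of_pos_of_neg hT567 hV0256]
  have hV0567 : Vdet (w 0) (w 5) (w 6) (w 7) (h 0) (h 5) (h 6) (h 7) < 0 := sign1 hT256 hprd10
  have hidd11 : tdet (w 0) (w 5) (w 6) * Vdet (w 3) (w 5) (w 6) (w 7) (h 3) (h 5) (h 6) (h 7) - tdet (w 3) (w 5) (w 6) * Vdet (w 0) (w 5) (w 6) (w 7) (h 0) (h 5) (h 6) (h 7) + tdet (w 5) (w 6) (w 7) * Vdet (w 0) (w 3) (w 5) (w 6) (h 0) (h 3) (h 5) (h 6) = 0 := by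
    simp only [tdet, Vdet, dperp]; ring
  have hprd11 : 0 < Vdet (w 0) (w 5) (w 6) (w 7) (h 0) (h 5) (h 6) (h 7) * tdet (w 3) (w 5) (w 6) := by linarith only [hidd11, mul_pos hT056 hV3567, mul_pos hT567 hV0356]
  have hT356 : tdet (w 3) (w 5) (w 6) < 0 := sign4 hV0567 hprd11
  have hidd12 : tdet (w 2) (w 5) (w 6) * Vdet (w 3) (w 4) (w 5) (w 6) (h 3) (h 4) (h 5) (h 6) - tdet (w 3) (w 5) (w 6) * Vdet (w 2) (w 4) (w 5) (w 6) (h 2) (h 4) (h 5) (h 6) + tdet (w 4) (w 5) (w 6) * Vdet (w 2) (w 3) (w 5) (w 6) (h 2) (h 3) (h 5) (h 6) = 0 := by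
    simp only [tdet, Vdet, dperp]; ring
  have hprd12 : 0 < tdet (w 3) (w 5) (w 6) * Vdet (w 2) (w 4) (w 5) (w 6) (h 2) (h 4) (h 5) (h 6) := by linarith only [hidd12, mul_pos hT256 hV3456, mul_pos hT456 hV2356]
  have hV2456 : Vdet (w 2) (w 4) (w 5) (w 6) (h 2) (h 4) (h 5) (h 6) < 0 := sign4 hT356 hprd12
  have hidd13 : tdet (w 2) (w 5) (w 6) * Vdet (w 4) (w 5) (w 6) (w 8) (h 4) (h 5) (h 6) (h 8) - tdet (w 4) (w 5) (w 6) * Vdet (w 2) (w 5) (w 6) (w 8) (h 2) (h 5) (h 6) (h 8) + tdet (w 5) (w 6) (w 8) * Vdet (w 2) (w 4) (w 5) (w 6) (h 2) (h 4) (h 5) (h 6) = 0 := by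
    simp only [tdet, Vdet, dperp]; ring
  have hprd13 : Vdet (w 2) (w 4) (w 5) (w 6) (h 2) (h 4) (h 5) (h 6) * tdet (w 5) (w 6) (w 8) < 0 := by linarith only [hidd13, mul_pos hT256 hV4568, mul_neg_of_pos_of_neg hT456 hV2568]
  have hT568 : 0 < tdet (w 5) (w 6) (w 8) := sign3 hV2456 hprd13
  have hidd14 : -tdet (w 2) (w 6) (w 8) * Vdet (w 5) (w 6) (w 7) (w 8) (h 5) (h 6) (h 7) (h 8) + tdet (w 5) (w 6) (w 8) * Vdet (w 2) (w 6) (w 7) (w 8) (h 2) (h 6) (h 7) (h 8) - tdet (w 6) (w 7) (w 8) * Vdet (w 2) (w 5) (w 6) (w 8) (h 2) (h 5) (h 6) (h 8) = 0 := by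
    simp only [tdet, Vdet, dperp]; ring
  have hprd14 : tdet (w 5) (w 6) (w 8) * Vdet (w 2) (w 6) (w 7) (w 8) (h 2) (h 6) (h 7) (h 8) < 0 := by linarith only [hidd14, mul_neg_of_pos_of_neg hT268 hV5678, mul_neg_of_pos_of_neg hT678 hV2568]
  have hV2678 : Vdet (w 2) (w 6) (w 7) (w 8) (h 2) (h 6) (h 7) (h 8) < 0 := sign1 hT568 hprd14
  have hidc : tdet (w 0) (w 7) (w 8) * Vdet (w 2) (w 6) (w 7) (w 8) (h 2) (h 6) (h 7) (h 8) - tdet (w 2) (w 7) (w 8) * Vdet (w 0) (w 6) (w 7) (w 8) (h 0) (h 6) (h 7) (h 8) + tdet (w 6) (w 7) (w 8) * Vdet (w 0) (w 2) (w 7) (w 8) (h 0) (h 2) (h 7) (h 8) = 0 := by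
    simp only [tdet, Vdet, dperp]; ring
  linarith only [hidc, mul_neg_of_pos_of_neg hT078 hV2678, mul_pos hT278 hV0678, mul_neg_of_pos_of_neg hT678 hV0278]

end
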